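/- Let ℓ be a prime, A a finite abelian ℓ-group with ℓ-rank r and ℓ²-rank s, and for i ≥ 0 let A_{⊕i} = A ⊕ (Z/ℓ)^i. Then |Λ(A_{⊕i})| = ℓ^{ir + i(i−1)/2} · |Λ(A)|, where Λ(B) is the set of alternating bilinear forms on B as a Z/exp(B)-module. -/

import Mathlib

/-!
An alternating form on `B ⊕ C` is the same as an alternating form on `B`, one on `C`, and an
arbitrary biadditive pairing `B × C → M`. For `C = ℤ/ℓ` the alternating part on `C` vanishes,
and a pairing `B × ℤ/ℓ → ℤ/N` with `ℓ ∣ N` is a homomorphism from `B` into the `ℓ`-torsion of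
`ℤ/N`, which is cyclic of order `ℓ`; by duality over `𝔽_ℓ` there are `|B/ℓB| = |B[ℓ]|` of them.
So adjoining one copy of `ℤ/ℓ` multiplies `|Λ|` by `|B[ℓ]|` and `|B[ℓ]|` by `ℓ`, and adjoining
`i` copies to `A` multiplies `|Λ(A)|` by `ℓ^r ⋯ ℓ^{r+i-1} = ℓ^{ir + i(i-1)/2}`. None of this
changes the exponent `N = exp A`, since `ℓ` divides it as soon as `r > 0`.
-/

open AddSubgroup (torsionBy)

section

variable {B C M : Type*} [AddCommGroup B] [AddCommGroup C] [AddCommGroup M]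

theorem ZMod.addMonoidHom_ext {n : ℕ} {f g : ZMod n →+ M} (h : f 1 = g 1) : f = g := by
  ext x
  obtain ⟨k, rfl⟩ := ZMod.intCast_surjective x
  rw [← zsmul_one, map_zsmul, map_zsmul, h]

theorem ZMod.lift_one (n : ℕ) (f : {f : ℤ →+ M // f n = 0}) : ZMod.lift n f 1 = f.1 1 := by
  simpa using ZMod.lift_coe n f 1

def ZMod.addMonoidHomEquivTorsionBy (n : ℕ) : (ZMod n →+ M) ≃+ torsionBy M n where
  toFun f := ⟨f 1, AddSubgroup.torsionBy.nsmul_iff.mpr <| by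
    rw [← map_nsmul, nsmul_one, ZMod.natCast_self, map_zero]⟩
  invFun m := ZMod.lift n ⟨zmultiplesHom M m, by simp⟩
  left_inv f := ZMod.addMonoidHom_ext <| (ZMod.lift_one n _).trans (one_zsmul _)
  right_inv m := Subtype.ext <| (ZMod.lift_one n _).trans (one_zsmul _)
  map_add' _ _ := rfl

theorem card_addMonoidHom_zmod [Finite B] {ℓ : ℕ} (hℓ : ℓ.Prime) :
    Nat.card (B →+ ZMod ℓ) = Nat.card (torsionBy B ℓ) := by
  have := Fact.mk hℓ
  have : Finite (ModN B ℓ) := Quotient.finite _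
  have : Module.Finite (ZMod ℓ) (ModN B ℓ) := Module.Finite.of_finite
  calc Nat.card (B →+ ZMod ℓ)
      = Nat.card {φ : B →+ ZMod ℓ // ∀ b, ℓ • φ b = 0} :=
        (Nat.card_congr (Equiv.subtypeUnivEquiv fun φ b => by simp)).symm
    _ = Nat.card (ModN B ℓ →ₗ[ZMod ℓ] ZMod ℓ) := (Nat.card_congr ModN.liftEquiv').symm
    _ = Nat.card (ModN B ℓ) :=
        (Nat.card_congr (Module.finBasis (ZMod ℓ) (ModN B ℓ)).toDualEquiv.toEquiv).symm
    _ = Nat.card (torsionBy B ℓ) :=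
        AddSubgroup.index_range (f := (LinearMap.lsmul ℤ B ℓ).toAddMonoidHom)

theorem card_torsionBy_zmod {ℓ N : ℕ} [NeZero N] (hℓ : ℓ.Prime) (hN : ℓ ∣ N) :
    Nat.card (torsionBy (ZMod N) ℓ) = ℓ := by
  have := Fact.mk hℓ
  refine Nat.dvd_antisymm ?_ ?_
  · rw [← IsAddCyclic.exponent_eq_card]
    exact AddMonoid.exponent_dvd_of_forall_nsmul_eq_zero AddSubgroup.torsionBy.nsmul
  · obtain ⟨x, hx⟩ :=
      exists_prime_addOrderOf_dvd_card' (G := ZMod N) ℓ (by rwa [Nat.card_zmod])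
    exact hx ▸ AddSubgroup.addOrderOf_dvd_natCard _
      (AddSubgroup.torsionBy.nsmul_iff.mpr (hx ▸ addOrderOf_nsmul_eq_zero x))

theorem card_addMonoidHom_zmod_addMonoidHom_zmod [Finite B] {ℓ N : ℕ} [NeZero N]
    (hℓ : ℓ.Prime) (hN : ℓ ∣ N) :
    Nat.card (B →+ ZMod ℓ →+ ZMod N) = Nat.card (torsionBy B ℓ) := by
  have e := zmodAddCyclicAddEquiv (inferInstance : IsAddCyclic (torsionBy (ZMod N) ℓ))
  rw [card_torsionBy_zmod hℓ hN] at e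
  rw [← card_addMonoidHom_zmod hℓ]
  exact Nat.card_congr <| (ZMod.addMonoidHomEquivTorsionBy ℓ).addMonoidHomCongrRightEquiv.trans
    e.symm.addMonoidHomCongrRightEquiv

theorem card_torsionBy_prod (n : ℕ) :
    Nat.card (torsionBy (B × C) n) = Nat.card (torsionBy B n) * Nat.card (torsionBy C n) := by
  rw [← Nat.card_prod]
  refine Nat.card_congr ((Equiv.subtypeEquivRight fun x => ?_).trans Equiv.subtypeProdEquivProd)
  simp [Prod.ext_iff]

theorem dvd_exponent_of_one_lt_card_torsionBy [Finite B] {ℓ : ℕ} (hℓ : ℓ.Prime)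
    (h : 1 < Nat.card (torsionBy B ℓ)) : ℓ ∣ AddMonoid.exponent B := by
  have := Fact.mk hℓ
  have := Finite.one_lt_card_iff_nontrivial.mp h
  obtain ⟨⟨x, hx⟩, hx0⟩ := exists_ne (0 : torsionBy B ℓ)
  rw [← addOrderOf_eq_prime (AddSubgroup.torsionBy.nsmul_iff.mp hx) (by simpa using hx0)]
  exact AddMonoid.addOrder_dvd_exponent x

theorem AddMonoid.exponent_prod_eq_left {ℓ : ℕ} (hB : ℓ ∣ AddMonoid.exponent B)
    (hC : ∀ x : C, ℓ • x = 0) : AddMonoid.exponent (B × C) = AddMonoid.exponent B := by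
  rw [AddMonoid.exponent_prod]
  exact lcm_eq_left_iff _ _ (by simp) |>.mpr ((exponent_dvd_of_forall_nsmul_eq_zero hC).trans hB)

variable (B M) in
/-- The paper's `Λ(B)` is `AltForm B (ZMod (AddMonoid.exponent B))`. -/
abbrev AltForm := {f : B →+ B →+ M // ∀ x, f x x = 0}

namespace AltForm

theorem apply_swap (f : AltForm B M) (x y : B) : f.1 y x = -f.1 x y := by
  have h := f.2 (x + y)
  simp only [map_add, AddMonoidHom.add_apply, f.2 x, f.2 y, zero_add, add_zero] at h
  exact eq_neg_of_add_eq_zero_left h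

def equivUnbundled :
    {f : B → B → M // (∀ x y z, f (x + y) z = f x z + f y z) ∧
      (∀ x y z, f x (y + z) = f x y + f x z) ∧ (∀ x, f x x = 0)} ≃ AltForm B M where
  toFun f := ⟨.mk' (fun x => .mk' (f.1 x) (f.2.2.1 x)) fun x y => AddMonoidHom.ext (f.2.1 x y),
    f.2.2.2⟩
  invFun f := ⟨fun x y => f.1 x y, by simp [f.2]⟩
  left_inv _ := rfl
  right_inv _ := rfl

def congr (e : B ≃+ C) : AltForm B M ≃ AltForm C M where
  toFun f := ⟨(f.1.compl₂ e.symm).comp e.symm, fun _ => f.2 _⟩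
  invFun f := ⟨(f.1.compl₂ e).comp e, fun _ => f.2 _⟩
  left_inv f := by ext; simp
  right_inv f := by ext; simp

/-- The restriction to `C × B` is minus the transpose of the one to `B × C`. -/
def prodEquiv : AltForm (B × C) M ≃ AltForm B M × (B →+ C →+ M) × AltForm C M where
  toFun f := (⟨(f.1.compl₂ (.inl B C)).comp (.inl B C), fun _ => f.2 _⟩,
    (f.1.compl₂ (.inr B C)).comp (.inl B C),
    ⟨(f.1.compl₂ (.inr B C)).comp (.inr B C), fun _ => f.2 _⟩)
  invFun gph := ⟨(gph.1.1.compl₂ (.fst B C)).comp (.fst B C)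
      + (gph.2.1.compl₂ (.snd B C)).comp (.fst B C)
      - (gph.2.1.flip.compl₂ (.fst B C)).comp (.snd B C)
      + (gph.2.2.1.compl₂ (.snd B C)).comp (.snd B C), fun x => by
    simp [gph.1.2, gph.2.2.2]⟩
  left_inv f := by
    ext ⟨b, c⟩ ⟨b', c'⟩
    have hx : ((b, c) : B × C) = (b, 0) + (0, c) := by simp
    have hy : ((b', c') : B × C) = (b', 0) + (0, c') := by simp
    conv_rhs => rw [hx, hy, map_add, map_add, AddMonoidHom.add_apply, AddMonoidHom.add_apply,
      f.apply_swap (b', 0) (0, c)]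
    simp only [AddMonoidHom.add_apply, AddMonoidHom.sub_apply, AddMonoidHom.coe_comp,
      AddMonoidHom.coe_fst, AddMonoidHom.coe_snd, Function.comp_apply, AddMonoidHom.compl₂_apply,
      AddMonoidHom.inl_apply, AddMonoidHom.inr_apply, AddMonoidHom.flip_apply]
    abel
  right_inv gph := by
    ext <;> simp

theorem card_zmod (n : ℕ) : Nat.card (AltForm (ZMod n) M) = 1 :=
  Nat.card_eq_one_iff_unique.mpr ⟨⟨fun f g => Subtype.ext <| ZMod.addMonoidHom_ext <|
    ZMod.addMonoidHom_ext <| by rw [f.2, g.2]⟩, ⟨⟨0, fun _ => rfl⟩⟩⟩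

theorem card_prod_zmod [Finite B] {ℓ N : ℕ} [NeZero N] (hℓ : ℓ.Prime) (hN : ℓ ∣ N) :
    Nat.card (AltForm (B × ZMod ℓ) (ZMod N)) =
      Nat.card (torsionBy B ℓ) * Nat.card (AltForm B (ZMod N)) := by
  rw [Nat.card_congr prodEquiv, Nat.card_prod, Nat.card_prod, card_zmod,
    card_addMonoidHom_zmod_addMonoidHom_zmod hℓ hN, mul_one, mul_comm]

theorem card_prod_pi [Finite B] {ℓ N : ℕ} [NeZero N] (hℓ : ℓ.Prime) (hN : ℓ ∣ N)
    {r : ℕ} (hr : Nat.card (torsionBy B ℓ) = ℓ ^ r) (i : ℕ) :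
    Nat.card (AltForm (B × (Fin i → ZMod ℓ)) (ZMod N)) =
      ℓ ^ (i * r + i * (i - 1) / 2) * Nat.card (AltForm B (ZMod N)) := by
  induction i generalizing B r with
  | zero =>
    simpa using Nat.card_congr (congr (M := ZMod N) (AddEquiv.prodUnique (N := Fin 0 → ZMod ℓ)))
  | succ i ih =>
    have : NeZero ℓ := ⟨hℓ.ne_zero⟩
    let e : B × (Fin (i + 1) → ZMod ℓ) ≃+ (B × ZMod ℓ) × (Fin i → ZMod ℓ) :=
      (AddEquiv.prodCongr (.refl B) (Fin.consLinearEquiv ℤ fun _ => ZMod ℓ).toAddEquiv.symm)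
        |>.trans (AddEquiv.prodAssoc ..).symm
    have hr' : Nat.card (torsionBy (B × ZMod ℓ) ℓ) = ℓ ^ (r + 1) := by
      rw [card_torsionBy_prod, hr, card_torsionBy_zmod hℓ dvd_rfl, pow_succ]
    rw [Nat.card_congr (congr e), ih hr', card_prod_zmod hℓ hN, hr, ← mul_assoc, ← pow_add,
      Nat.triangle_succ]
    congr 2
    ring

end AltForm

end

theorem lam_card_add_elementary_general (ℓ : ℕ) (hℓ : ℓ.Prime)
    (A : Type*) [AddCommGroup A] [Finite A]
    (r : ℕ) (hr0 : 0 < r)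
    (hr : Nat.card {a : A // ℓ • a = 0} = ℓ ^ r)
    (i : ℕ) :
    Nat.card {f : (A × (Fin i → ZMod ℓ)) → (A × (Fin i → ZMod ℓ)) →
        ZMod (AddMonoid.exponent (A × (Fin i → ZMod ℓ))) //
      (∀ x y z, f (x + y) z = f x z + f y z) ∧
      (∀ x y z, f x (y + z) = f x y + f x z) ∧
      (∀ x, f x x = 0)}
    = ℓ ^ (i * r + i * (i - 1) / 2) *
      Nat.card {f : A → A → ZMod (AddMonoid.exponent A) //
        (∀ x y z, f (x + y) z = f x z + f y z) ∧
        (∀ x y z, f x (y + z) = f x y + f x z) ∧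
        (∀ x, f x x = 0)} := by
  have hr' : Nat.card (torsionBy A ℓ) = ℓ ^ r :=
    (Nat.card_congr (Equiv.subtypeEquivRight fun _ => AddSubgroup.torsionBy.nsmul_iff)).trans hr
  have hdvd : ℓ ∣ AddMonoid.exponent A :=
    dvd_exponent_of_one_lt_card_torsionBy hℓ (hr' ▸ Nat.one_lt_pow hr0.ne' hℓ.one_lt)
  have : NeZero (AddMonoid.exponent A) := ⟨AddMonoid.exponent_ne_zero_of_finite⟩
  rw [AddMonoid.exponent_prod_eq_left hdvd fun x => funext fun _ => by simp,
    Nat.card_congr AltForm.equivUnbundled, Nat.card_congr AltForm.equivUnbundled]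
  exact AltForm.card_prod_pi hℓ hdvd hr' i

/-- For a finite abelian `ℓ`-group `A` of `ℓ`-rank `r ≥ 1` and
`A_{⊕i} = A ⊕ (Z/ℓ)^i`, we have `|Λ(A_{⊕i})| = ℓ^{ir + i(i−1)/2}·|Λ(A)|`,
where `Λ(B)` is the set of alternating bilinear forms on `B` as a
`Z/exp(B)`-module (equivalently, alternating biadditive forms with values in
`Z/exp(B)`). -/
theorem lam_card_add_elementary (ℓ : ℕ) (hℓ : ℓ.Prime)
    (A : Type*) [AddCommGroup A] [Finite A]
    (hℓgrp : ∀ a : A, ∃ n : ℕ, (ℓ ^ n) • a = 0)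
    (r : ℕ) (hr0 : 0 < r)
    (hr : Nat.card {a : A // ℓ • a = 0} = ℓ ^ r)
    (i : ℕ) :
    Nat.card {f : (A × (Fin i → ZMod ℓ)) → (A × (Fin i → ZMod ℓ)) →
        ZMod (AddMonoid.exponent (A × (Fin i → ZMod ℓ))) //
      (∀ x y z, f (x + y) z = f x z + f y z) ∧
      (∀ x y z, f x (y + z) = f x y + f x z) ∧
      (∀ x, f x x = 0)}
    = ℓ ^ (i * r + i * (i - 1) / 2) *
      Nat.card {f : A → A → ZMod (AddMonoid.exponent A) //
        (∀ x y z, f (x + y) z = f x z + f y z) ∧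
        (∀ x y z, f x (y + z) = f x y + f x z) ∧
        (∀ x, f x x = 0)} :=
  lam_card_add_elementary_general ℓ hℓ A r hr0 hr i
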